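/- arXiv:1910.05912 — 7 statements merged into one kernel-verified Lean document; each statement's English description precedes it below -/
import Mathlib

section
/- With A = (δ₁−δ₁₂)(δ₂−δ₁₂)/(1−δ₁₂), one has A ≥ 0, D > 0, and the identity R₁* + R₂* + R₀ = ( (1−δ₁)(δ₂−δ₁₂) + (1−δ₂)(δ₁−δ₁₂) − A·R₀ ) / D; consequently, the total rate R₁* + R₂* + R₀ at the Case II corner point is a nonincreasing function of R₀. -/
/-!
Write `a = 1 - δ₁`, `b = 1 - δ₂`, `c = 1 - δ₁₂`, so that `0 ≤ b < c` and `a ≤ c`.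
Then `D = c - ab/c > 0` because `ab ≤ cb < c²`, and the coefficient of `R₀` in the total rate is
`-(c - a)/D - (c - b)/D + 1 = (a + b - c - ab/c)/D = -((c - a)(c - b)/c)/D = -A/D ≤ 0`.
-/

lemma sub_mul_div_self_pos {a b c : ℝ} (hb : 0 ≤ b) (hac : a ≤ c) (hbc : b < c) :
    0 < c - a * b / c := by
  have hc : 0 < c := hb.trans_lt hbc
  rw [sub_pos, div_lt_iff₀ hc]
  exact mul_lt_mul' hac hbc hb hc

lemma sub_mul_div_self_sub_sub {a b c : ℝ} (hc : c ≠ 0) :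
    c - a * b / c - (c - a) - (c - b) = -((c - a) * (c - b) / c) := by
  field_simp
  ring

lemma antitone_sub_mul_div {K A D : ℝ} (hA : 0 ≤ A) (hD : 0 ≤ D) :
    Antitone fun r : ℝ => (K - A * r) / D := fun _ _ hrs =>
  div_le_div_of_nonneg_right (sub_le_sub_left (mul_le_mul_of_nonneg_left hrs hA) K) hD

theorem caseII_total_rate_decreasing_general (δ₁ δ₂ δ₁₂ R₀ : ℝ)
    (h1 : δ₁₂ ≤ δ₁) (h3 : δ₂ < 1) (h4 : δ₁₂ < δ₂)
    (D : ℝ) (hD : D = (1 - δ₁₂) - (1 - δ₁) * (1 - δ₂) / (1 - δ₁₂))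
    (R₁s R₂s : ℝ → ℝ)
    (hR₁ : ∀ r, R₁s r = ((1 - δ₁) * (δ₂ - δ₁₂) - (δ₁ - δ₁₂) * r) / D)
    (hR₂ : ∀ r, R₂s r = ((1 - δ₂) * (δ₁ - δ₁₂) - (δ₂ - δ₁₂) * r) / D)
    (A : ℝ) (hA : A = (δ₁ - δ₁₂) * (δ₂ - δ₁₂) / (1 - δ₁₂)) :
    0 ≤ A ∧ 0 < D ∧
    R₁s R₀ + R₂s R₀ + R₀
      = ((1 - δ₁) * (δ₂ - δ₁₂) + (1 - δ₂) * (δ₁ - δ₁₂) - A * R₀) / D ∧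
    Antitone (fun r : ℝ => R₁s r + R₂s r + r) := by
  have hc : 0 < 1 - δ₁₂ := by linarith
  have hA_nonneg : 0 ≤ A := hA ▸ div_nonneg (mul_nonneg (by linarith) (by linarith)) hc.le
  have hD_pos : 0 < D := hD ▸ sub_mul_div_self_pos (by linarith) (by linarith) (by linarith)
  have hA_eq : A = (δ₁ - δ₁₂) + (δ₂ - δ₁₂) - D := by
    have := sub_mul_div_self_sub_sub (a := 1 - δ₁) (b := 1 - δ₂) hc.ne'
    rw [hD, hA]
    linear_combination this
  have total : ∀ r, R₁s r + R₂s r + r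
      = ((1 - δ₁) * (δ₂ - δ₁₂) + (1 - δ₂) * (δ₁ - δ₁₂) - A * r) / D := by
    intro r
    rw [hR₁, hR₂, hA_eq]
    field_simp
    ring
  exact ⟨hA_nonneg, hD_pos, total R₀, funext total ▸ antitone_sub_mul_div hA_nonneg hD_pos.le⟩

/-- With `A = (δ₁−δ₁₂)(δ₂−δ₁₂)/(1−δ₁₂)`, one has `A ≥ 0`, `D > 0`, the identity
`R₁* + R₂* + R₀ = ((1−δ₁)(δ₂−δ₁₂) + (1−δ₂)(δ₁−δ₁₂) − A·R₀)/D`, and the total rate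
at the Case II corner point is a nonincreasing function of `R₀`. -/
theorem caseII_total_rate_decreasing (δ₁ δ₂ δ₁₂ R₀ : ℝ)
    (h0 : 0 ≤ δ₁₂) (h1 : δ₁₂ ≤ δ₁) (h2 : δ₁ ≤ δ₂) (h3 : δ₂ < 1) (h4 : δ₁₂ < δ₂)
    (hR₀ : 0 ≤ R₀)
    (D : ℝ) (hD : D = (1 - δ₁₂) - (1 - δ₁) * (1 - δ₂) / (1 - δ₁₂))
    (R₁s R₂s : ℝ → ℝ)
    (hR₁ : ∀ r, R₁s r = ((1 - δ₁) * (δ₂ - δ₁₂) - (δ₁ - δ₁₂) * r) / D)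
    (hR₂ : ∀ r, R₂s r = ((1 - δ₂) * (δ₁ - δ₁₂) - (δ₂ - δ₁₂) * r) / D)
    (A : ℝ) (hA : A = (δ₁ - δ₁₂) * (δ₂ - δ₁₂) / (1 - δ₁₂)) :
    0 ≤ A ∧ 0 < D ∧
    R₁s R₀ + R₂s R₀ + R₀
      = ((1 - δ₁) * (δ₂ - δ₁₂) + (1 - δ₂) * (δ₁ - δ₁₂) - A * R₀) / D ∧
    Antitone (fun r : ℝ => R₁s r + R₂s r + r) :=
  caseII_total_rate_decreasing_general δ₁ δ₂ δ₁₂ R₀ h1 h3 h4 D hD R₁s R₂s hR₁ hR₂ A hA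
end

section
/- The Case II corner point satisfies (1−δ₂)·(δ₁−δ₁₂)·R₁* ≥ (1−δ₁)·(δ₂−δ₁₂)·R₂*. (This is the inequality k_{1|2} ≥ ((1−δ₁)/(1−δ₂))·k_{2|1} ensuring that Segment b of Phase 3 of the transmission scheme has nonnegative length.) -/
/-- The Case II corner point satisfies
`(1−δ₂)(δ₁−δ₁₂)·R₁* ≥ (1−δ₁)(δ₂−δ₁₂)·R₂*`, i.e. `k_{1|2} ≥ ((1−δ₁)/(1−δ₂))·k_{2|1}`,
so Segment b of Phase 3 has nonnegative length. -/
theorem caseII_segment_b_nonneg_length (δ₁ δ₂ δ₁₂ R₀ : ℝ)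
    (h0 : 0 ≤ δ₁₂) (h1 : δ₁₂ ≤ δ₁) (h2 : δ₁ ≤ δ₂) (h3 : δ₂ < 1) (h4 : δ₁₂ < δ₂)
    (hR₀ : 0 ≤ R₀)
    (D R₁s R₂s : ℝ)
    (hD : D = (1 - δ₁₂) - (1 - δ₁) * (1 - δ₂) / (1 - δ₁₂))
    (hR₁ : R₁s = ((1 - δ₁) * (δ₂ - δ₁₂) - (δ₁ - δ₁₂) * R₀) / D)
    (hR₂ : R₂s = ((1 - δ₂) * (δ₁ - δ₁₂) - (δ₂ - δ₁₂) * R₀) / D) :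
    (1 - δ₂) * (δ₁ - δ₁₂) * R₁s ≥ (1 - δ₁) * (δ₂ - δ₁₂) * R₂s := by
  have h12 : (0:ℝ) < 1 - δ₁₂ := by linarith
  have hDpos : 0 < D := by
    rw [hD]
    rw [sub_pos, div_lt_iff₀ h12]
    nlinarith
  subst hR₁ hR₂
  rw [ge_iff_le, ← mul_div_assoc, ← mul_div_assoc, div_le_div_iff₀ hDpos hDpos]
  have ht : 0 ≤ (1 - δ₁) * (δ₂ - δ₁₂)^2 - (1 - δ₂) * (δ₁ - δ₁₂)^2 := by
    nlinarith [mul_nonneg (by linarith : (0:ℝ) ≤ 1 - δ₂)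
      (by nlinarith : (0:ℝ) ≤ (δ₂ - δ₁₂)^2 - (δ₁ - δ₁₂)^2),
      mul_nonneg (by linarith : (0:ℝ) ≤ δ₂ - δ₁) (sq_nonneg (δ₂ - δ₁₂))]
  nlinarith [mul_nonneg (mul_nonneg hDpos.le hR₀) ht]
end

section
/- Let 0 ≤ δ₁₂ ≤ δ₁ ≤ δ₂ < 1 with δ₁₂ < δ₂, let R̄ < R₀ < 1−δ₂, and let k₁ > 0. Define R₁* = (1−δ₁₂)·(1 − R₀/(1−δ₂)), k₀ = (R₀/R₁*)·k₁, n₂ₐ = ((δ₁−δ₁₂)/((1−δ₁)(1−δ₁₂)))·k₁, and n₂ᵦ = k₀/(1−δ₂) − n₂ₐ. Then n₂ᵦ > 0 and k₀ < (1−δ₁)·n₂ᵦ, i.e., k₀/n₂ᵦ < 1−δ₁. -/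
/-- In the Case I (`R₀ > R̄`) transmission scheme, Segment b of Phase 2 has positive
length `n₂ᵦ > 0` and the common message can be decoded by receiver 1 since
`k₀/n₂ᵦ < 1−δ₁`. -/
theorem caseI_decodability (δ₁ δ₂ δ₁₂ R₀ k₁ : ℝ)
    (h0 : 0 ≤ δ₁₂) (h1 : δ₁₂ ≤ δ₁) (h2 : δ₁ ≤ δ₂) (h3 : δ₂ < 1) (h4 : δ₁₂ < δ₂)
    (hR₀l : ((δ₁ - δ₁₂) / (δ₂ - δ₁₂)) * (1 - δ₂) < R₀) (hR₀u : R₀ < 1 - δ₂)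
    (hk₁ : 0 < k₁)
    (R₁s k₀ n₂a n₂b : ℝ)
    (hR₁ : R₁s = (1 - δ₁₂) * (1 - R₀ / (1 - δ₂)))
    (hk₀ : k₀ = (R₀ / R₁s) * k₁)
    (hn₂a : n₂a = ((δ₁ - δ₁₂) / ((1 - δ₁) * (1 - δ₁₂))) * k₁)
    (hn₂b : n₂b = k₀ / (1 - δ₂) - n₂a) :
    0 < n₂b ∧ k₀ < (1 - δ₁) * n₂b := by
  have ha : (0:ℝ) < 1 - δ₂ := by linarith
  have hb : (0:ℝ) < 1 - δ₁ := by linarith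
  have hc : (0:ℝ) < 1 - δ₁₂ := by linarith
  have hd : (0:ℝ) < δ₂ - δ₁₂ := by linarith
  have he : (0:ℝ) < 1 - δ₂ - R₀ := by linarith
  -- rewrite lower bound
  have hl : (δ₁ - δ₁₂) * (1 - δ₂) < R₀ * (δ₂ - δ₁₂) := by
    rw [div_mul_eq_mul_div, div_lt_iff₀ hd] at hR₀l
    linarith
  have hR₀pos : 0 < R₀ := by nlinarith
  have hR₁pos : 0 < R₁s := by
    rw [hR₁]
    have : 0 < 1 - R₀ / (1 - δ₂) := by
      rw [sub_pos, div_lt_one ha]; linarith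
    positivity
  have hk₀pos : 0 < k₀ := by rw [hk₀]; positivity
  have hEq : (1 - δ₁) * n₂b - k₀ =
      k₁ * (R₀ * (δ₂ - δ₁₂) - (δ₁ - δ₁₂) * (1 - δ₂)) / ((1 - δ₁₂) * (1 - δ₂ - R₀)) := by
    rw [hn₂b, hn₂a, hk₀, hR₁]
    field_simp
    ring
  have key : k₀ < (1 - δ₁) * n₂b := by
    have hpos : 0 < k₁ * (R₀ * (δ₂ - δ₁₂) - (δ₁ - δ₁₂) * (1 - δ₂)) / ((1 - δ₁₂) * (1 - δ₂ - R₀)) :=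
      div_pos (mul_pos hk₁ (by linarith)) (by positivity)
    linarith
  exact ⟨by nlinarith, key⟩
end

section
/- The Case II corner point satisfies ((1−δ₂)(δ₁−δ₁₂)/((1−δ₁)(1−δ₁₂)))·R₁* − ((δ₂−δ₁₂)/(1−δ₁₂))·R₂* ≤ R₀. (This is the inequality ((1−δ₂)/(1−δ₁))·k_{1|2} − k_{2|1} ≤ k₀, i.e., k_{0,3b} ≤ k₀, ensuring that Segment b of Phase 3 does not require more common bits than available.) -/
/-!
Write `a = 1 - δ₁`, `b = 1 - δ₂`, `c = 1 - δ₁₂` for the success probabilities. In the combination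
`b (c - a) / (a c) · R₁* - (c - b) / c · R₂*` the terms of `R₁*` and `R₂*` not involving `R₀`
cancel exactly, so the combination is `κ · R₀` with
`κ = ((c - b)² - b (c - a)² / a) / (c² - a b)`. Then `κ ≤ 1` because
`c² - a b - (c - b)² + b (c - a)² / a = b (2c - a - b) + b (c - a)² / a ≥ 0`.
-/

namespace ErasureBroadcast

noncomputable def commonCoeff (a b c : ℝ) : ℝ :=
  ((c - b) ^ 2 - b * (c - a) ^ 2 / a) / (c ^ 2 - a * b)

theorem combination_cornerRates_eq {a b c R : ℝ} (ha : a ≠ 0) (hc : c ≠ 0)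
    (hD : c ^ 2 - a * b ≠ 0) :
    b * (c - a) / (a * c) * ((a * (c - b) - (c - a) * R) / (c - a * b / c))
      - (c - b) / c * ((b * (c - a) - (c - b) * R) / (c - a * b / c))
      = R * commonCoeff a b c := by
  have hD' : c - a * b / c = (c ^ 2 - a * b) / c := by field_simp
  rw [hD', commonCoeff]
  field_simp
  ring

theorem commonCoeff_le_one {a b c : ℝ} (ha : 0 < a) (hb : 0 < b) (hac : a ≤ c) (hbc : b < c) :
    commonCoeff a b c ≤ 1 := by
  have hD : 0 < c ^ 2 - a * b := by nlinarith
  rw [commonCoeff, div_le_one hD, sub_le_iff_le_add, ← sub_le_iff_le_add']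
  calc (c - b) ^ 2 - (c ^ 2 - a * b) = b * (a + b - 2 * c) := by ring
    _ ≤ 0 := mul_nonpos_of_nonneg_of_nonpos hb.le (by linarith)
    _ ≤ b * (c - a) ^ 2 / a := by positivity

end ErasureBroadcast

open ErasureBroadcast in
theorem caseII_k03b_le_k0_general (δ₁ δ₂ δ₁₂ R₀ : ℝ)
    (h1 : δ₁₂ ≤ δ₁) (h2 : δ₁ ≤ δ₂) (h3 : δ₂ < 1) (h4 : δ₁₂ < δ₂)
    (hR₀ : 0 ≤ R₀)
    (D R₁s R₂s : ℝ)
    (hD : D = (1 - δ₁₂) - (1 - δ₁) * (1 - δ₂) / (1 - δ₁₂))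
    (hR₁ : R₁s = ((1 - δ₁) * (δ₂ - δ₁₂) - (δ₁ - δ₁₂) * R₀) / D)
    (hR₂ : R₂s = ((1 - δ₂) * (δ₁ - δ₁₂) - (δ₂ - δ₁₂) * R₀) / D) :
    ((1 - δ₂) * (δ₁ - δ₁₂) / ((1 - δ₁) * (1 - δ₁₂))) * R₁s
      - ((δ₂ - δ₁₂) / (1 - δ₁₂)) * R₂s ≤ R₀ := by
  have hκ := commonCoeff_le_one (a := 1 - δ₁) (b := 1 - δ₂) (c := 1 - δ₁₂)
    (by linarith) (by linarith) (by linarith) (by linarith)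
  have hD₀ : (1 - δ₁₂) ^ 2 - (1 - δ₁) * (1 - δ₂) ≠ 0 := by nlinarith
  have hcomb := combination_cornerRates_eq (R := R₀) (b := 1 - δ₂)
    (by linarith : 1 - δ₁ ≠ 0) (by linarith : 1 - δ₁₂ ≠ 0) hD₀
  simp only [sub_sub_sub_cancel_left] at hcomb
  rw [hR₁, hR₂, hD, hcomb]
  exact mul_le_of_le_one_right hR₀ hκ

/-- The Case II corner point satisfies
`((1−δ₂)(δ₁−δ₁₂)/((1−δ₁)(1−δ₁₂)))·R₁* − ((δ₂−δ₁₂)/(1−δ₁₂))·R₂* ≤ R₀`,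
which is the inequality `k_{0,3b} ≤ k₀`. -/
theorem caseII_k03b_le_k0 (δ₁ δ₂ δ₁₂ R₀ : ℝ)
    (h0 : 0 ≤ δ₁₂) (h1 : δ₁₂ ≤ δ₁) (h2 : δ₁ ≤ δ₂) (h3 : δ₂ < 1) (h4 : δ₁₂ < δ₂)
    (hR₀ : 0 ≤ R₀)
    (D R₁s R₂s : ℝ)
    (hD : D = (1 - δ₁₂) - (1 - δ₁) * (1 - δ₂) / (1 - δ₁₂))
    (hR₁ : R₁s = ((1 - δ₁) * (δ₂ - δ₁₂) - (δ₁ - δ₁₂) * R₀) / D)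
    (hR₂ : R₂s = ((1 - δ₂) * (δ₁ - δ₁₂) - (δ₂ - δ₁₂) * R₀) / D) :
    ((1 - δ₂) * (δ₁ - δ₁₂) / ((1 - δ₁) * (1 - δ₁₂))) * R₁s
      - ((δ₂ - δ₁₂) / (1 - δ₁₂)) * R₂s ≤ R₀ :=
  caseII_k03b_le_k0_general δ₁ δ₂ δ₁₂ R₀ h1 h2 h3 h4 hR₀ D R₁s R₂s hD hR₁ hR₂
end

section
/- For real numbers 0 ≤ δ₁₂ ≤ δ₁ ≤ δ₂ ≤ 1, one has (1−δ₁)·(δ₂−δ₁₂)² − (1−δ₂)·(δ₁−δ₁₂)² ≤ (1−δ₁)·( (1−δ₁₂)² − (1−δ₁)(1−δ₂) ). -/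
/-- For `0 ≤ δ₁₂ ≤ δ₁ ≤ δ₂ ≤ 1`,
`(1−δ₁)(δ₂−δ₁₂)² − (1−δ₂)(δ₁−δ₁₂)² ≤ (1−δ₁)((1−δ₁₂)² − (1−δ₁)(1−δ₂))`. -/
theorem key_polynomial_inequality (δ₁ δ₂ δ₁₂ : ℝ)
    (h0 : 0 ≤ δ₁₂) (h1 : δ₁₂ ≤ δ₁) (h2 : δ₁ ≤ δ₂) (h3 : δ₂ ≤ 1) :
    (1 - δ₁) * (δ₂ - δ₁₂) ^ 2 - (1 - δ₂) * (δ₁ - δ₁₂) ^ 2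
      ≤ (1 - δ₁) * ((1 - δ₁₂) ^ 2 - (1 - δ₁) * (1 - δ₂)) := by
  have ha : (0:ℝ) ≤ 1 - δ₂ := by linarith
  have hab : (1 - δ₂) * (1 - δ₁) ≤ (1 - δ₁₂) ^ 2 := by nlinarith
  nlinarith [mul_nonneg ha (sub_nonneg.2 hab)]
end

section
/- Assume additionally δ₁₂ < 1, δ₁ < 1, δ₂ < 1, D ≠ 0, R₁* ≠ 0, and let k₁ > 0. Define k₀ = (R₀/R₁*)·k₁, k₂ = (R₂*/R₁*)·k₁, k_{1|2} = ((δ₁−δ₁₂)/(1−δ₁₂))·k₁, k_{2|1} = ((δ₂−δ₁₂)/(1−δ₁₂))·k₂, n₃ᵦ = (1/(1−δ₁))·( k_{1|2} − ((1−δ₁)/(1−δ₂))·k_{2|1} ), and n₃𝒸 = k₀/(1−δ₂) − n₃ᵦ. Then (δ₂−δ₁)·n₃𝒸 = (1−δ₂)·n₃ᵦ, and consequently k₀ = (1−δ₁)·n₃𝒸; in particular k₀/n₃𝒸 ≤ 1−δ₁ whenever n₃𝒸 > 0. -/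
/-- In the Case II transmission scheme, `(δ₂−δ₁)·n₃𝒸 = (1−δ₂)·n₃ᵦ`, hence
`k₀ = (1−δ₁)·n₃𝒸`; in particular `k₀/n₃𝒸 ≤ 1−δ₁` whenever `n₃𝒸 > 0`, so receiver 1
can decode all common bits from Segment c of Phase 3. -/
theorem caseII_decodability (δ₁ δ₂ δ₁₂ R₀ : ℝ)
    (h0 : 0 ≤ δ₁₂) (h1 : δ₁₂ ≤ δ₁) (h2 : δ₁ ≤ δ₂) (h3 : δ₂ < 1) (h4 : δ₁₂ < δ₂)
    (hR₀ : 0 ≤ R₀)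
    (h5 : δ₁₂ < 1) (h6 : δ₁ < 1)
    (D R₁s R₂s : ℝ)
    (hD : D = (1 - δ₁₂) - (1 - δ₁) * (1 - δ₂) / (1 - δ₁₂))
    (hR₁ : R₁s = ((1 - δ₁) * (δ₂ - δ₁₂) - (δ₁ - δ₁₂) * R₀) / D)
    (hR₂ : R₂s = ((1 - δ₂) * (δ₁ - δ₁₂) - (δ₂ - δ₁₂) * R₀) / D)
    (hDne : D ≠ 0) (hR₁ne : R₁s ≠ 0)
    (k₁ : ℝ) (hk₁ : 0 < k₁)
    (k₀ k₂ k₁₂ k₂₁ n₃b n₃c : ℝ)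
    (hk₀ : k₀ = (R₀ / R₁s) * k₁)
    (hk₂ : k₂ = (R₂s / R₁s) * k₁)
    (hk₁₂ : k₁₂ = ((δ₁ - δ₁₂) / (1 - δ₁₂)) * k₁)
    (hk₂₁ : k₂₁ = ((δ₂ - δ₁₂) / (1 - δ₁₂)) * k₂)
    (hn₃b : n₃b = (1 / (1 - δ₁)) * (k₁₂ - ((1 - δ₁) / (1 - δ₂)) * k₂₁))
    (hn₃c : n₃c = k₀ / (1 - δ₂) - n₃b) :
    (δ₂ - δ₁) * n₃c = (1 - δ₂) * n₃b ∧
    k₀ = (1 - δ₁) * n₃c ∧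
    (0 < n₃c → k₀ / n₃c ≤ 1 - δ₁) := by
  have e12 : (1 : ℝ) - δ₁₂ ≠ 0 := by linarith
  have e1 : (1 : ℝ) - δ₁ ≠ 0 := by linarith
  have e2 : (1 : ℝ) - δ₂ ≠ 0 := by linarith
  have hR1D : R₁s * D = (1 - δ₁) * (δ₂ - δ₁₂) - (δ₁ - δ₁₂) * R₀ := by
    rw [hR₁]; field_simp
  have hR2D : R₂s * D = (1 - δ₂) * (δ₁ - δ₁₂) - (δ₂ - δ₁₂) * R₀ := by
    rw [hR₂]; field_simp
  have hDc : (1 - δ₁₂) * D = (1 - δ₁₂) ^ 2 - (1 - δ₁) * (1 - δ₂) := by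
    rw [hD]; field_simp
  have hk0R : k₀ * R₁s = R₀ * k₁ := by rw [hk₀]; field_simp
  have hk2R : k₂ * R₁s = R₂s * k₁ := by rw [hk₂]; field_simp
  have hk12 : (1 - δ₁₂) * k₁₂ = (δ₁ - δ₁₂) * k₁ := by rw [hk₁₂]; field_simp
  have hk21 : (1 - δ₁₂) * k₂₁ = (δ₂ - δ₁₂) * k₂ := by rw [hk₂₁]; field_simp
  have hb : (1 - δ₁) * (1 - δ₂) * n₃b = (1 - δ₂) * k₁₂ - (1 - δ₁) * k₂₁ := by
    rw [hn₃b]; field_simp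
  have hc : (1 - δ₂) * n₃c = k₀ - (1 - δ₂) * n₃b := by
    rw [hn₃c]; field_simp
  have keymul : ((δ₂ - δ₁) * k₀) * ((1 - δ₁₂) * (R₁s * D)) =
      ((1 - δ₂) * k₁₂ - (1 - δ₁) * k₂₁) * ((1 - δ₁₂) * (R₁s * D)) := by
    linear_combination ((δ₂ - δ₁) * (1 - δ₁₂) * D) * hk0R
      + ((δ₂ - δ₁) * R₀ * k₁) * hDc
      - ((1 - δ₂) * (R₁s * D)) * hk12
      - ((1 - δ₂) * (δ₁ - δ₁₂) * k₁) * hR1D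
      + ((1 - δ₁) * (R₁s * D)) * hk21
      + ((1 - δ₁) * (δ₂ - δ₁₂) * D) * hk2R
      + ((1 - δ₁) * (δ₂ - δ₁₂) * k₁) * hR2D
  have hne : (1 - δ₁₂) * (R₁s * D) ≠ 0 := by
    exact mul_ne_zero e12 (mul_ne_zero hR₁ne hDne)
  have key' : (δ₂ - δ₁) * k₀ = (1 - δ₂) * k₁₂ - (1 - δ₁) * k₂₁ :=
    mul_right_cancel₀ hne keymul
  have keymul2 : ((δ₂ - δ₁) * n₃c) * ((1 - δ₂) * (1 - δ₁)) =
      ((1 - δ₂) * n₃b) * ((1 - δ₂) * (1 - δ₁)) := by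
    linear_combination ((1 - δ₁) * (δ₂ - δ₁)) * hc + (1 - δ₁) * key' - (1 - δ₁) * hb
  have key : (δ₂ - δ₁) * n₃c = (1 - δ₂) * n₃b :=
    mul_right_cancel₀ (mul_ne_zero e2 e1) keymul2
  have hkk : k₀ = (1 - δ₁) * n₃c := by linarith [hc, key]
  refine ⟨key, hkk, fun hpos => ?_⟩
  rw [hkk, mul_div_assoc, div_self hpos.ne', mul_one]
end

section
/- Let 0 ≤ δ₁₂ ≤ δ₁ ≤ δ₂ < 1 with δ₁₂ < δ₂, and let R₀ ≥ R̄ with R₀ ≥ 0. Then for all real R₁ ≥ 0 and R₂ ≥ 0 satisfying R₁/(1−δ₁₂) + (R₂+R₀)/(1−δ₂) ≤ 1, it also holds that (R₁+R₀)/(1−δ₁) + R₂/(1−δ₁₂) ≤ 1. (Thus for R₀ ≥ R̄ only the first outer bound is active and the capacity region is a triangle.) -/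
/-- For `R₀ ≥ R̄`, the first outer bound implies the second, so only the first
bound is active and the capacity region is a triangle. -/
theorem second_bound_inactive_for_large_R0 (δ₁ δ₂ δ₁₂ R₀ : ℝ)
    (h0 : 0 ≤ δ₁₂) (h1 : δ₁₂ ≤ δ₁) (h2 : δ₁ ≤ δ₂) (h3 : δ₂ < 1) (h4 : δ₁₂ < δ₂)
    (hR₀ : 0 ≤ R₀)
    (hR₀large : ((δ₁ - δ₁₂) / (δ₂ - δ₁₂)) * (1 - δ₂) ≤ R₀) :
    ∀ R₁ R₂ : ℝ, 0 ≤ R₁ → 0 ≤ R₂ →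
      R₁ / (1 - δ₁₂) + (R₂ + R₀) / (1 - δ₂) ≤ 1 →
      (R₁ + R₀) / (1 - δ₁) + R₂ / (1 - δ₁₂) ≤ 1 := by
  intro R₁ R₂ hR1 hR2 hbound
  have ha : (0:ℝ) < 1 - δ₁₂ := by linarith
  have hb : (0:ℝ) < 1 - δ₂ := by linarith
  have hc : (0:ℝ) < 1 - δ₁ := by linarith
  have hd : (0:ℝ) < δ₂ - δ₁₂ := by linarith
  rw [div_mul_eq_mul_div, div_le_iff₀ hd] at hR₀large
  rw [div_add_div _ _ ha.ne' hb.ne', div_le_one (by positivity)] at hbound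
  rw [div_add_div _ _ hc.ne' ha.ne', div_le_one (by positivity)]
  nlinarith [mul_le_mul_of_nonneg_right hbound (sub_nonneg.2 h1),
    mul_le_mul_of_nonneg_right hR₀large ha.le,
    mul_nonneg (mul_nonneg hR2 hc.le) hd.le,
    mul_nonneg (mul_nonneg hR2 ha.le) (sub_nonneg.2 h1), hb, sq_nonneg (1 - δ₂)]
end
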